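/- Let I be an open interval and f : I → ℝ a positive-derivative C¹ function such that F : I² → ℝ, F(x,u) := (f(x) − f(u))/f′(u), is convex. Then f′ has one-sided second derivatives f″₊ and f″₋ everywhere, and for every x, v ∈ I one has (f(v) − f(x))(f″₊(v) − f″₋(v)) ≥ 0; consequently f″₊ = f″₋ on I, i.e., f′ is differentiable everywhere. -/

import Mathlib

/-! For fixed `x`, the slice `u ↦ (f x - f u) / f' u` of `F` is convex, so it has one-sided
derivatives at every `v` whose jump (right minus left) is nonnegative. Since `1 / f'` is the
difference of two slices divided by `f a - f b`, the derivative `f'` has one-sided derivatives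
as well, and by the product rule the jump of the slice at `v` equals
`(f v - f x) (f''₊ v - f''₋ v) / f' v ^ 2`. Choosing `x` on either side of `v`, where `f` is
strictly increasing, forces `f''₊ v = f''₋ v`. -/

open Set Topology

theorem ConvexOn.comp_prodMk_left {𝕜 E F β : Type*} [Semiring 𝕜] [PartialOrder 𝕜]
    [AddCommMonoid E] [AddCommMonoid F] [AddCommMonoid β] [PartialOrder β]
    [Module 𝕜 E] [Module 𝕜 F] [SMul 𝕜 β] {s : Set E} {t : Set F} {G : E × F → β}
    (hG : ConvexOn 𝕜 (s ×ˢ t) G) {x : E} (hx : x ∈ s) :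
    ConvexOn 𝕜 t fun u => G (x, u) := by
  refine ⟨fun u hu w hw a b ha hb hab => ?_, fun u hu w hw a b ha hb hab => ?_⟩
  · simpa [Convex.combo_self hab] using
      (hG.1 (mk_mem_prod hx hu) (mk_mem_prod hx hw) ha hb hab).2
  · simpa [Convex.combo_self hab] using hG.2 (mk_mem_prod hx hu) (mk_mem_prod hx hw) ha hb hab

theorem IsOpen.exists_mem_lt {s : Set ℝ} (hs : IsOpen s) {v : ℝ} (hv : v ∈ s) :
    ∃ x ∈ s, x < v :=
  ((eventually_nhdsWithin_of_eventually_nhds (hs.mem_nhds hv)).and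
    (self_mem_nhdsWithin : ∀ᶠ x in 𝓝[<] v, x < v)).exists

theorem IsOpen.exists_mem_gt {s : Set ℝ} (hs : IsOpen s) {v : ℝ} (hv : v ∈ s) :
    ∃ x ∈ s, v < x :=
  ((eventually_nhdsWithin_of_eventually_nhds (hs.mem_nhds hv)).and
    (self_mem_nhdsWithin : ∀ᶠ x in 𝓝[>] v, v < x)).exists

theorem HasDerivWithinAt.hasDerivAt_of_Iio_of_Ioi {g : ℝ → ℝ} {d v : ℝ}
    (hl : HasDerivWithinAt g d (Iio v) v) (hr : HasDerivWithinAt g d (Ioi v) v) :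
    HasDerivAt g d v :=
  hasDerivAt_iff_tendsto_slope_left_right.2
    ⟨(hasDerivWithinAt_iff_tendsto_slope' self_notMem_Iio).1 hl,
      (hasDerivWithinAt_iff_tendsto_slope' self_notMem_Ioi).1 hr⟩

noncomputable def derivJump (g : ℝ → ℝ) (v : ℝ) : ℝ :=
  derivWithin g (Ioi v) v - derivWithin g (Iio v) v

section derivJump

variable {g h : ℝ → ℝ} {v : ℝ}

theorem ConvexOn.derivJump_nonneg {S : Set ℝ} (hg : ConvexOn ℝ S g) (hv : v ∈ interior S) :
    0 ≤ derivJump g v :=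
  sub_nonneg.2 (hg.leftDeriv_le_rightDeriv_of_mem_interior hv)

theorem derivJump_mul_of_differentiableAt (hg : DifferentiableAt ℝ g v)
    (hhr : DifferentiableWithinAt ℝ h (Ioi v) v) (hhl : DifferentiableWithinAt ℝ h (Iio v) v) :
    derivJump (fun u => g u * h u) v = g v * derivJump h v := by
  rw [derivJump, derivJump, derivWithin_fun_mul hg.differentiableWithinAt hhr,
    derivWithin_fun_mul hg.differentiableWithinAt hhl,
    hg.derivWithin (uniqueDiffWithinAt_Ioi v), hg.derivWithin (uniqueDiffWithinAt_Iio v)]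
  ring

theorem derivJump_inv (hhr : DifferentiableWithinAt ℝ h (Ioi v) v)
    (hhl : DifferentiableWithinAt ℝ h (Iio v) v) (hv : h v ≠ 0) :
    derivJump (fun u => (h u)⁻¹) v = -derivJump h v / h v ^ 2 := by
  rw [derivJump, derivJump, derivWithin_fun_inv' hhr hv, derivWithin_fun_inv' hhl hv]
  ring

theorem differentiableAt_of_derivJump_eq_zero (hgr : DifferentiableWithinAt ℝ g (Ioi v) v)
    (hgl : DifferentiableWithinAt ℝ g (Iio v) v) (h : derivJump g v = 0) :
    DifferentiableAt ℝ g v :=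
  (HasDerivWithinAt.hasDerivAt_of_Iio_of_Ioi ((sub_eq_zero.1 h) ▸ hgl.hasDerivWithinAt)
    hgr.hasDerivWithinAt).differentiableAt

end derivJump

theorem StrictMonoOn.eq_zero_of_forall_sub_mul_nonneg {I : Set ℝ} {f : ℝ → ℝ}
    (hf : StrictMonoOn f I) (hI : IsOpen I) {v c : ℝ} (hv : v ∈ I)
    (h : ∀ x ∈ I, 0 ≤ (f v - f x) * c) : c = 0 := by
  obtain ⟨a, ha, hav⟩ := hI.exists_mem_lt hv
  obtain ⟨b, hb, hvb⟩ := hI.exists_mem_gt hv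
  have hc_nonneg : 0 ≤ c := nonneg_of_mul_nonneg_right (h a ha) (sub_pos.2 (hf ha hv hav))
  have hc_nonpos : c ≤ 0 := nonpos_of_mul_nonneg_right (h b hb) (sub_neg.2 (hf hv hb hvb))
  exact le_antisymm hc_nonpos hc_nonneg

section slices

variable {f f' : ℝ → ℝ} {s : Set ℝ} {a b v x : ℝ}

theorem inv_eq_slice_sub_slice (hab : f a ≠ f b) (u : ℝ) :
    (f' u)⁻¹ = ((f a - f u) / f' u - (f b - f u) / f' u) / (f a - f b) := by
  rw [div_sub_div_same, sub_sub_sub_cancel_right, div_div_cancel_left' (sub_ne_zero.2 hab)]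

theorem differentiableWithinAt_of_slices
    (ha : DifferentiableWithinAt ℝ (fun u => (f a - f u) / f' u) s v)
    (hb : DifferentiableWithinAt ℝ (fun u => (f b - f u) / f' u) s v) (hab : f a ≠ f b)
    (hv : f' v ≠ 0) : DifferentiableWithinAt ℝ f' s v := by
  have hinv : DifferentiableWithinAt ℝ (fun u => (f' u)⁻¹) s v := by
    simp_rw [inv_eq_slice_sub_slice hab]
    exact (ha.sub hb).div_const _
  simpa only [inv_inv] using hinv.fun_inv (inv_ne_zero hv)

theorem differentiableWithinAt_Ioi_Iio_of_convexOn_slices {I : Set ℝ} (hI : IsOpen I)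
    (hslice : ∀ x ∈ I, ConvexOn ℝ I fun u => (f x - f u) / f' u) (ha : a ∈ I) (hv : v ∈ I)
    (hav : f a ≠ f v) (hf'v : f' v ≠ 0) :
    DifferentiableWithinAt ℝ f' (Ioi v) v ∧ DifferentiableWithinAt ℝ f' (Iio v) v := by
  have hvI : v ∈ interior I := hI.interior_eq.symm ▸ hv
  exact ⟨differentiableWithinAt_of_slices
      ((hslice a ha).differentiableWithinAt_Ioi_of_mem_interior hvI)
      ((hslice v hv).differentiableWithinAt_Ioi_of_mem_interior hvI) hav hf'v,
    differentiableWithinAt_of_slices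
      ((hslice a ha).differentiableWithinAt_Iio_of_mem_interior hvI)
      ((hslice v hv).differentiableWithinAt_Iio_of_mem_interior hvI) hav hf'v⟩

theorem sub_mul_derivJump_nonneg (hf : DifferentiableAt ℝ f v) (hv : f' v ≠ 0)
    (hf'r : DifferentiableWithinAt ℝ f' (Ioi v) v) (hf'l : DifferentiableWithinAt ℝ f' (Iio v) v)
    (hslice : 0 ≤ derivJump (fun u => (f x - f u) / f' u) v) :
    0 ≤ (f v - f x) * derivJump f' v := by
  simp_rw [div_eq_mul_inv] at hslice
  rw [derivJump_mul_of_differentiableAt ((differentiableAt_const (f x)).fun_sub hf)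
    (hf'r.fun_inv hv) (hf'l.fun_inv hv), derivJump_inv hf'r hf'l hv] at hslice
  have hsign : (f x - f v) * (-derivJump f' v / f' v ^ 2) =
      (f v - f x) * derivJump f' v * (f' v ^ 2)⁻¹ := by
    ring
  rw [hsign] at hslice
  exact nonneg_of_mul_nonneg_left hslice (by positivity)

end slices

theorem stmt_12 (I : Set ℝ) (hIop : IsOpen I) (hIcv : Convex ℝ I)
    (f f' : ℝ → ℝ)
    (hf : ∀ x ∈ I, HasDerivAt f (f' x) x)
    (hf'pos : ∀ x ∈ I, 0 < f' x)
    (hF : ConvexOn ℝ (I ×ˢ I) (fun p : ℝ × ℝ => (f p.1 - f p.2) / f' p.2)) :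
    ∃ fpp fmm : ℝ → ℝ,
      (∀ v ∈ I, HasDerivWithinAt f' (fpp v) (Set.Ioi v) v ∧
        HasDerivWithinAt f' (fmm v) (Set.Iio v) v) ∧
      (∀ x ∈ I, ∀ v ∈ I, 0 ≤ (f v - f x) * (fpp v - fmm v)) ∧
      (∀ v ∈ I, fpp v = fmm v) ∧
      (∀ v ∈ I, DifferentiableAt ℝ f' v) := by
  have hmono : StrictMonoOn f I :=
    strictMonoOn_of_hasDerivWithinAt_pos hIcv
      (fun x hx => (hf x hx).continuousAt.continuousWithinAt)
      (fun x hx => (hf x (interior_subset hx)).hasDerivWithinAt)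
      (fun x hx => hf'pos x (interior_subset hx))
  have hslice : ∀ x ∈ I, ConvexOn ℝ I fun u => (f x - f u) / f' u :=
    fun x hx => hF.comp_prodMk_left hx
  have hdiff : ∀ v ∈ I, DifferentiableWithinAt ℝ f' (Ioi v) v ∧
      DifferentiableWithinAt ℝ f' (Iio v) v := fun v hv => by
    obtain ⟨a, ha, hav⟩ := hIop.exists_mem_lt hv
    exact differentiableWithinAt_Ioi_Iio_of_convexOn_slices hIop hslice ha hv
      (hmono ha hv hav).ne (hf'pos v hv).ne'
  have hjump : ∀ x ∈ I, ∀ v ∈ I, 0 ≤ (f v - f x) * derivJump f' v := fun x hx v hv =>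
    sub_mul_derivJump_nonneg (hf v hv).differentiableAt (hf'pos v hv).ne' (hdiff v hv).1
      (hdiff v hv).2 ((hslice x hx).derivJump_nonneg (hIop.interior_eq.symm ▸ hv))
  have hjump_zero : ∀ v ∈ I, derivJump f' v = 0 := fun v hv =>
    hmono.eq_zero_of_forall_sub_mul_nonneg hIop hv fun x hx => hjump x hx v hv
  exact ⟨fun v => derivWithin f' (Ioi v) v, fun v => derivWithin f' (Iio v) v,
    fun v hv => ⟨(hdiff v hv).1.hasDerivWithinAt, (hdiff v hv).2.hasDerivWithinAt⟩, hjump,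
    fun v hv => sub_eq_zero.1 (hjump_zero v hv),
    fun v hv => differentiableAt_of_derivJump_eq_zero (hdiff v hv).1 (hdiff v hv).2
      (hjump_zero v hv)⟩
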